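/- arXiv:1409.2801 — 2 statements merged into one kernel-verified Lean document; each statement's English description precedes it below -/
import Mathlib

section
/- Let d₁ > d₂ with d₁, d₂ ∈ (0,2), and let Z₁, Z₂ be closed subsets of [0,1] such that: (a) for all rationals s < s' with Z₂ ∩ (s,s') ≠ ∅, dim_H((Z₁ ∪ Z₂) ∩ (s,s')) = 1 − d₂/2; (b) for all rationals s < s' with Z₂ ∩ (s,s') = ∅ and Z₁ ∩ (s,s') ≠ ∅, dim_H((Z₁ ∪ Z₂) ∩ (s,s')) = 1 − d₁/2 < 1 − d₂/2; and (c) Z₁ \ Z₂ is dense in Z₁. Then Z₂ = {t ∈ Z₁ ∪ Z₂ : ∀ rationals s < t < s', dim_H((Z₁ ∪ Z₂) ∩ (s,s')) = 1 − d₂/2} and Z₁ = closure((Z₁ ∪ Z₂) \ Z₂). In particular, the pair (Z₁, Z₂) can be recovered measurably from the union Z₁ ∪ Z₂. -/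
/-!
Every rational window around a point of `Z₂` meets `Z₂`, so by (a) it sees dimension
`1 - d₂/2`. A point of `Z₁ \ Z₂` has, `Z₂` being closed, a rational window missing `Z₂`,
where (b) forces the strictly smaller dimension `1 - d₁/2`. This identifies `Z₂` inside the
union, hence also `Z₁ \ Z₂ = (Z₁ ∪ Z₂) \ Z₂`, whose closure is `Z₁` by (c).
-/

open Set Topology

theorem exists_rat_Ioo_subset_of_mem_nhds {U : Set ℝ} {t : ℝ} (hU : U ∈ 𝓝 t) :
    ∃ s s' : ℚ, (s : ℝ) < t ∧ t < s' ∧ Ioo (s : ℝ) s' ⊆ U := by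
  obtain ⟨l, u, ⟨hlt, htu⟩, hsub⟩ := mem_nhds_iff_exists_Ioo_subset.mp hU
  obtain ⟨s, hls, hst⟩ := exists_rat_btwn hlt
  obtain ⟨s', hts', hs'u⟩ := exists_rat_btwn htu
  exact ⟨s, s', hst, hts', (Ioo_subset_Ioo hls.le hs'u.le).trans hsub⟩

theorem exists_rat_Ioo_inter_eq_empty_of_isClosed {C : Set ℝ} {t : ℝ} (hC : IsClosed C)
    (ht : t ∉ C) : ∃ s s' : ℚ, (s : ℝ) < t ∧ t < s' ∧ C ∩ Ioo (s : ℝ) s' = ∅ := by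
  obtain ⟨s, s', hst, hts', hsub⟩ :=
    exists_rat_Ioo_subset_of_mem_nhds (hC.isOpen_compl.mem_nhds ht)
  exact ⟨s, s', hst, hts', disjoint_iff_inter_eq_empty.mp (disjoint_compl_right.mono_right hsub)⟩

theorem closure_union_sdiff_right_eq {X : Type*} [TopologicalSpace X] {A B : Set X}
    (hA : IsClosed A) (hdense : A ⊆ closure (A \ B)) : closure ((A ∪ B) \ B) = A := by
  rw [union_sdiff_right]
  exact (closure_minimal sdiff_subset hA).antisymm hdense

theorem recover_pair_from_union_general (d₁ d₂ : ℝ)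
    (h₁ : d₂ < d₁) (h₂ : d₁ < 2)
    (Z₁ Z₂ : Set ℝ) (hc₁ : IsClosed Z₁) (hc₂ : IsClosed Z₂)
    (ha : ∀ s s' : ℚ, (s:ℝ) < (s':ℝ) → (Z₂ ∩ Set.Ioo (s:ℝ) (s':ℝ)).Nonempty →
      dimH ((Z₁ ∪ Z₂) ∩ Set.Ioo (s:ℝ) (s':ℝ)) = ENNReal.ofReal (1 - d₂ / 2))
    (hb : ∀ s s' : ℚ, (s:ℝ) < (s':ℝ) → Z₂ ∩ Set.Ioo (s:ℝ) (s':ℝ) = ∅ →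
      (Z₁ ∩ Set.Ioo (s:ℝ) (s':ℝ)).Nonempty →
      dimH ((Z₁ ∪ Z₂) ∩ Set.Ioo (s:ℝ) (s':ℝ)) = ENNReal.ofReal (1 - d₁ / 2))
    (hcdense : Z₁ ⊆ closure (Z₁ \ Z₂)) :
    Z₂ = {t ∈ Z₁ ∪ Z₂ | ∀ s s' : ℚ, (s:ℝ) < t → t < (s':ℝ) →
        dimH ((Z₁ ∪ Z₂) ∩ Set.Ioo (s:ℝ) (s':ℝ)) = ENNReal.ofReal (1 - d₂ / 2)} ∧
      Z₁ = closure ((Z₁ ∪ Z₂) \ Z₂) := by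
  have hdim_lt : ENNReal.ofReal (1 - d₁ / 2) < ENNReal.ofReal (1 - d₂ / 2) :=
    (ENNReal.ofReal_lt_ofReal_iff (by linarith)).mpr (by linarith)
  refine ⟨Subset.antisymm ?_ ?_, (closure_union_sdiff_right_eq hc₁ hcdense).symm⟩
  · exact fun t ht ↦ ⟨Or.inr ht, fun s s' hst hts' ↦
      ha s s' (hst.trans hts') ⟨t, ht, hst, hts'⟩⟩
  · rintro t ⟨ht, hdim⟩
    by_contra htZ₂
    obtain ⟨s, s', hst, hts', hmiss⟩ := exists_rat_Ioo_inter_eq_empty_of_isClosed hc₂ htZ₂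
    have hZ₁ : (Z₁ ∩ Ioo (s : ℝ) s').Nonempty := ⟨t, ht.resolve_right htZ₂, hst, hts'⟩
    have := hb s s' (hst.trans hts') hmiss hZ₁
    exact hdim_lt.ne (this.symm.trans (hdim s s' hst hts'))

/-- **Deterministic recovery lemma.** If `d₂ < d₁` (both in `(0,2)`) and the
closed sets `Z₁, Z₂ ⊆ [0,1]` satisfy the Hausdorff-dimension dichotomy
(a), (b) on rational intervals and the density condition (c), then `Z₂` and `Z₁`
can be recovered from the union `Z₁ ∪ Z₂`. -/
theorem recover_pair_from_union (d₁ d₂ : ℝ)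
    (h₀ : 0 < d₂) (h₁ : d₂ < d₁) (h₂ : d₁ < 2)
    (Z₁ Z₂ : Set ℝ) (hc₁ : IsClosed Z₁) (hc₂ : IsClosed Z₂)
    (hs₁ : Z₁ ⊆ Set.Icc (0:ℝ) 1) (hs₂ : Z₂ ⊆ Set.Icc (0:ℝ) 1)
    (ha : ∀ s s' : ℚ, (s:ℝ) < (s':ℝ) → (Z₂ ∩ Set.Ioo (s:ℝ) (s':ℝ)).Nonempty →
      dimH ((Z₁ ∪ Z₂) ∩ Set.Ioo (s:ℝ) (s':ℝ)) = ENNReal.ofReal (1 - d₂ / 2))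
    (hb : ∀ s s' : ℚ, (s:ℝ) < (s':ℝ) → Z₂ ∩ Set.Ioo (s:ℝ) (s':ℝ) = ∅ →
      (Z₁ ∩ Set.Ioo (s:ℝ) (s':ℝ)).Nonempty →
      dimH ((Z₁ ∪ Z₂) ∩ Set.Ioo (s:ℝ) (s':ℝ)) = ENNReal.ofReal (1 - d₁ / 2))
    (hcdense : Z₁ ⊆ closure (Z₁ \ Z₂)) :
    Z₂ = {t ∈ Z₁ ∪ Z₂ | ∀ s s' : ℚ, (s:ℝ) < t → t < (s':ℝ) →
        dimH ((Z₁ ∪ Z₂) ∩ Set.Ioo (s:ℝ) (s':ℝ)) = ENNReal.ofReal (1 - d₂ / 2)} ∧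
      Z₁ = closure ((Z₁ ∪ Z₂) \ Z₂) :=
  recover_pair_from_union_general d₁ d₂ h₁ h₂ Z₁ Z₂ hc₁ hc₂ ha hb hcdense
end

section
/- Let Z ⊆ [0,∞) be a random closed set and φ a measurable map on closed sets with φ(Z) ⊆ Z, which is local (φ(Z ∩ [s,t]) = φ(Z) ∩ [s,t] a.s. for all 0 < s < t) and stationary (φ(Z + t) = φ(Z) + t a.s.). Suppose that for two events A⁻, A⁺ defined for each rational q > 0 by A_q⁺ = {inf(Z ∩ (q,∞)) = inf(φ(Z) ∩ (q,∞))} and A_q⁻ = {sup(Z ∩ (0,q)) = sup(φ(Z) ∩ (0,q))}, each event has probability 0 or 1 independently of q, and almost surely A_q⁺ holds for all rational q simultaneously (the case y = (·,1)). Then almost surely φ(Z) ⊇ Ẑ ∩ Z in the following sense: if t ∈ Z and there exist qₙ ∈ ℚ with qₙ ↗ t and Z ∩ (qₙ, t) ≠ ∅ for all n, then t ∈ φ(Z). In particular if additionally Z has no isolated points from the left along rationals, then φ(Z) = Z a.s. -/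
open MeasureTheory Set Filter Topology

/-!
Fix a sample point at which `inf (Z ∩ (q,∞)) = inf (φ(Z) ∩ (q,∞))` for every positive rational
`q`. If `qₙ < t` and `Z` meets `(qₙ, t)`, this common infimum is a point of the closed set `φ(Z)`
lying in `[qₙ, t]`; as `qₙ → t` these points are squeezed to `t`, so `t ∈ φ(Z)`.
-/

theorem IsClosed.mem_of_forall_exists_mem_Icc {α ι : Type*} [TopologicalSpace α] [LinearOrder α]
    [OrderTopology α] {F : Set α} (hF : IsClosed F) {l : Filter ι} [l.NeBot] {q : ι → α} {t : α}
    (hq : Tendsto q l (𝓝 t)) (h : ∀ i, ∃ x ∈ F, x ∈ Icc (q i) t) : t ∈ F := by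
  choose x hxF hx using h
  have hxt : Tendsto x l (𝓝 t) :=
    tendsto_of_tendsto_of_tendsto_of_le_of_le hq tendsto_const_nhds
      (fun i => (hx i).1) (fun i => (hx i).2)
  exact hF.mem_of_tendsto hxt (Eventually.of_forall hxF)

theorem csInf_inter_Ioi_mem_Icc_of_eq {F S : Set ℝ} (hF : IsClosed F) {q z : ℝ} (hq : 0 < q)
    (hz : z ∈ S) (hqz : q < z) (h : sInf (S ∩ Ioi q) = sInf (F ∩ Ioi q)) :
    sInf (F ∩ Ioi q) ∈ F ∩ Icc q z := by
  have hbdd : ∀ A : Set ℝ, BddBelow (A ∩ Ioi q) := fun A => ⟨q, fun x hx => hx.2.le⟩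
  have hq_le : q ≤ sInf (S ∩ Ioi q) := le_csInf ⟨z, hz, hqz⟩ fun x hx => hx.2.le
  -- `sInf ∅ = 0 < q` rules out an empty `F ∩ (q,∞)`.
  have hne : (F ∩ Ioi q).Nonempty := by
    by_contra hempty
    rw [not_nonempty_iff_eq_empty.mp hempty, Real.sInf_empty] at h
    linarith
  refine ⟨?_, le_csInf hne fun x hx => hx.2.le, h ▸ csInf_le (hbdd S) ⟨hz, hqz⟩⟩
  exact closure_minimal inter_subset_left hF (csInf_mem_closure hne (hbdd F))

theorem mem_of_sInf_inter_Ioi_eq {F S : Set ℝ} (hF : IsClosed F)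
    (h : ∀ q : ℚ, 0 < q → sInf (S ∩ Ioi (q : ℝ)) = sInf (F ∩ Ioi (q : ℝ))) {t : ℝ} {q : ℕ → ℚ}
    (hq : ∀ n, 0 < (q n : ℝ) ∧ (q n : ℝ) < t ∧ (S ∩ Ioo (q n : ℝ) t).Nonempty)
    (hqt : Tendsto (fun n => (q n : ℝ)) atTop (𝓝 t)) : t ∈ F := by
  refine hF.mem_of_forall_exists_mem_Icc hqt fun n => ?_
  obtain ⟨hq0, -, z, hzS, hqz, hzt⟩ := hq n
  have hmem := csInf_inter_Ioi_mem_Icc_of_eq hF hq0 hzS hqz (h (q n) (mod_cast hq0))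
  exact ⟨_, hmem.1, hmem.2.1, hmem.2.2.trans hzt.le⟩

theorem opening_left_approximation_general {Ω : Type*} [MeasurableSpace Ω]
    (P : Measure Ω)
    (Z : Ω → Set ℝ) (φ : Set ℝ → Set ℝ)
    (hsub : ∀ ω, φ (Z ω) ⊆ Z ω) (hclosed : ∀ ω, IsClosed (φ (Z ω)))
    (hplus : ∀ᵐ ω ∂P, ∀ q : ℚ, 0 < q →
      sInf (Z ω ∩ Set.Ioi (q:ℝ)) = sInf (φ (Z ω) ∩ Set.Ioi (q:ℝ))) :
    ∀ᵐ ω ∂P,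
      (∀ t ∈ Z ω,
        (∃ q : ℕ → ℚ,
          (∀ n, 0 < ((q n : ℚ):ℝ) ∧ ((q n : ℚ):ℝ) < t ∧
            (Z ω ∩ Set.Ioo ((q n : ℚ):ℝ) t).Nonempty) ∧
          Tendsto (fun n => ((q n : ℚ):ℝ)) atTop (nhds t)) →
        t ∈ φ (Z ω)) ∧
      ((∀ t ∈ Z ω, ∃ q : ℕ → ℚ,
          (∀ n, 0 < ((q n : ℚ):ℝ) ∧ ((q n : ℚ):ℝ) < t ∧
            (Z ω ∩ Set.Ioo ((q n : ℚ):ℝ) t).Nonempty) ∧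
          Tendsto (fun n => ((q n : ℚ):ℝ)) atTop (nhds t)) →
        φ (Z ω) = Z ω) := by
  filter_upwards [hplus] with ω hω
  refine ⟨fun t _ ⟨_, hq, hqt⟩ => mem_of_sInf_inter_Ioi_eq (hclosed ω) hω hq hqt, fun hall => ?_⟩
  refine (hsub ω).antisymm fun t ht => ?_
  obtain ⟨_, hq, hqt⟩ := hall t ht
  exact mem_of_sInf_inter_Ioi_eq (hclosed ω) hω hq hqt

/-- **Combinatorial core of the triviality of local stationary openings.**
Let `φ` be a local stationary opening (`φ(Z) ⊆ Z` closed) of a random closed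
set `Z ⊆ [0,∞)`, and suppose that almost surely the events
`A_q⁺ : inf(Z ∩ (q,∞)) = inf(φ(Z) ∩ (q,∞))` hold simultaneously for all
rationals `q > 0`. Then almost surely: every `t ∈ Z` that is approximable from
the left by rationals `qₙ ↗ t` with `Z ∩ (qₙ, t) ≠ ∅` belongs to `φ(Z)`; in
particular, if every point of `Z` is so approximable then `φ(Z) = Z`. -/
theorem opening_left_approximation {Ω : Type*} [MeasurableSpace Ω]
    (P : Measure Ω) [IsProbabilityMeasure P]
    (Z : Ω → Set ℝ) (φ : Set ℝ → Set ℝ)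
    (hsub : ∀ ω, φ (Z ω) ⊆ Z ω) (hclosed : ∀ ω, IsClosed (φ (Z ω)))
    (hloc : ∀ᵐ ω ∂P, ∀ s t : ℝ, 0 < s → s < t →
      φ (Z ω ∩ Set.Icc s t) = φ (Z ω) ∩ Set.Icc s t)
    (hstat : ∀ᵐ ω ∂P, ∀ t : ℝ, 0 ≤ t →
      φ ((fun x => x + t) '' Z ω) = (fun x => x + t) '' φ (Z ω))
    (hplus : ∀ᵐ ω ∂P, ∀ q : ℚ, 0 < q →
      sInf (Z ω ∩ Set.Ioi (q:ℝ)) = sInf (φ (Z ω) ∩ Set.Ioi (q:ℝ))) :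
    ∀ᵐ ω ∂P,
      (∀ t ∈ Z ω,
        (∃ q : ℕ → ℚ,
          (∀ n, 0 < ((q n : ℚ):ℝ) ∧ ((q n : ℚ):ℝ) < t ∧
            (Z ω ∩ Set.Ioo ((q n : ℚ):ℝ) t).Nonempty) ∧
          Tendsto (fun n => ((q n : ℚ):ℝ)) atTop (nhds t)) →
        t ∈ φ (Z ω)) ∧
      ((∀ t ∈ Z ω, ∃ q : ℕ → ℚ,
          (∀ n, 0 < ((q n : ℚ):ℝ) ∧ ((q n : ℚ):ℝ) < t ∧
            (Z ω ∩ Set.Ioo ((q n : ℚ):ℝ) t).Nonempty) ∧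
          Tendsto (fun n => ((q n : ℚ):ℝ)) atTop (nhds t)) →
        φ (Z ω) = Z ω) :=
  opening_left_approximation_general P Z φ hsub hclosed hplus
end
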